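/- Let φ = (1+√5)/2. The function s ↦ (1 − φ^{−2s})^{1/s} is strictly increasing on the real interval [1, ∞): if 1 ≤ s₁ < s₂ then (1 − φ^{−2s₁})^{1/s₁} < (1 − φ^{−2s₂})^{1/s₂}. -/
import Mathlib


/-- For `φ = (1+√5)/2`, the function `s ↦ (1 − φ^{−2s})^{1/s}` is strictly
increasing on `[1, ∞)`. -/
theorem strictMono_one_sub_goldenRatio_rpow (φ : ℝ) (hφ : φ = (1 + Real.sqrt 5) / 2)
    (s₁ s₂ : ℝ) (h1 : 1 ≤ s₁) (h12 : s₁ < s₂) :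
    (1 - φ ^ (-(2 * s₁))) ^ (1 / s₁) < (1 - φ ^ (-(2 * s₂))) ^ (1 / s₂) := by
  have hφ1 : 1 < φ := by
    have h5 : (1:ℝ) < Real.sqrt 5 := by
      have := Real.sqrt_lt_sqrt (by norm_num : (0:ℝ) ≤ 1) (by norm_num : (1:ℝ) < 5)
      simpa using this
    rw [hφ]; linarith
  have hs1 : 0 < s₁ := lt_of_lt_of_le one_pos h1
  have hs2 : 0 < s₂ := hs1.trans h12
  have hlt : φ ^ (-(2 * s₂)) < φ ^ (-(2 * s₁)) :=
    (Real.rpow_lt_rpow_left_iff hφ1).2 (by linarith)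
  have hlt1 : φ ^ (-(2 * s₁)) < 1 :=
    Real.rpow_lt_one_of_one_lt_of_neg hφ1 (by linarith : -(2 * s₁) < 0)
  have hpos2 : 0 < φ ^ (-(2 * s₂)) := Real.rpow_pos_of_pos (by linarith) _
  set a₁ := 1 - φ ^ (-(2 * s₁)) with ha1
  set a₂ := 1 - φ ^ (-(2 * s₂)) with ha2
  have ha1pos : 0 < a₁ := by rw [ha1]; linarith
  have ha12 : a₁ < a₂ := by rw [ha1, ha2]; linarith
  have ha2lt : a₂ < 1 := by rw [ha2]; linarith
  have hlog1 : Real.log a₁ < Real.log a₂ := Real.log_lt_log ha1pos ha12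
  have hlog2 : Real.log a₂ < 0 := Real.log_neg (ha1pos.trans ha12) ha2lt
  rw [Real.rpow_def_of_pos ha1pos, Real.rpow_def_of_pos (ha1pos.trans ha12),
    Real.exp_lt_exp]
  have h1s' : 1 / s₂ < 1 / s₁ := one_div_lt_one_div_of_lt hs1 h12
  calc Real.log a₁ * (1 / s₁) < Real.log a₂ * (1 / s₁) :=
        mul_lt_mul_of_pos_right hlog1 (by positivity)
    _ < Real.log a₂ * (1 / s₂) := by nlinarith
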